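/- If E ⊆ 𝔽_q^3 and for every y ∈ 𝔽_q^3 \ {0} the hypothesis h_y : E → {0,1} is defined by h_y(x) = 1 iff x·y = t (t ≠ 0), then no subset of E of size 4 is shattered by the hypothesis class {h_y : y ∈ E}. In particular, the VC dimension of this class is at most 3. -/

import Mathlib

open Finset

def dot3 {F : Type*} [Field F] (x y : Fin 3 → F) : F := ∑ i, x i * y i

open Module

/-! A set of more than `dim V` points carries a nontrivial linear relation `∑ c x • x = 0`.
Applying a functional `φ` turns it into `∑ c x * φ x = 0`. If the hyperplane `φ = t` (with `t ≠ 0`)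
contains every point, this forces `∑ c x = 0`; if it contains every point but one, `x₀` with
`c x₀ ≠ 0`, the same relation puts `x₀` on it too. So the two labellings "all" and
"all but `x₀`" cannot both be realised. -/

section LinearRelation

variable {K V : Type*} [Field K] [AddCommGroup V] [Module K V]
  {C : Finset V} {c : V → K} (φ : Dual K V) {t : K}

theorem sum_eq_zero_of_forall_apply_eq (hc : ∑ x ∈ C, c x • x = 0) (ht : t ≠ 0)
    (hφ : ∀ x ∈ C, φ x = t) : ∑ x ∈ C, c x = 0 := by
  have h : ∑ x ∈ C, c x * φ x = 0 := by simpa using congrArg φ hc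
  rw [sum_congr rfl fun x hx => by rw [hφ x hx], ← sum_mul] at h
  exact (mul_eq_zero.mp h).resolve_right ht

theorem apply_eq_of_forall_apply_eq_of_ne (hc : ∑ x ∈ C, c x • x = 0)
    (hsum : ∑ x ∈ C, c x = 0) {x₀ : V} (hx₀ : x₀ ∈ C) (hcx₀ : c x₀ ≠ 0)
    (hφ : ∀ x ∈ C, x ≠ x₀ → φ x = t) : φ x₀ = t := by
  classical
  have h : ∑ x ∈ C, c x * φ x = 0 := by simpa using congrArg φ hc
  rw [← add_sum_erase _ _ hx₀,
    sum_congr rfl fun x hx => by rw [hφ x (mem_of_mem_erase hx) (ne_of_mem_erase hx)],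
    ← sum_mul] at h
  have hrest : ∑ x ∈ C.erase x₀, c x = -c x₀ := by
    rw [← add_sum_erase _ _ hx₀] at hsum
    exact eq_neg_of_add_eq_zero_right hsum
  have : c x₀ * (φ x₀ - t) = 0 := by linear_combination h - t * hrest
  exact sub_eq_zero.mp ((mul_eq_zero.mp this).resolve_left hcx₀)

theorem not_forall_exists_dual_of_finrank_lt_card [FiniteDimensional K V]
    (hC : finrank K V < #C) (ht : t ≠ 0) :
    ¬ ∀ f : V → Bool, ∃ φ : Dual K V, ∀ x ∈ C, (f x = true ↔ φ x = t) := by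
  classical
  intro H
  obtain ⟨c, hc, x₀, hx₀, hcx₀⟩ := exists_nontrivial_relation_of_finrank_lt_card hC
  obtain ⟨φ₁, hφ₁⟩ := H fun _ => true
  have hsum := sum_eq_zero_of_forall_apply_eq φ₁ hc ht fun x hx => (hφ₁ x hx).mp rfl
  obtain ⟨φ₂, hφ₂⟩ := H fun x => decide (x ≠ x₀)
  have hx₀_off : φ₂ x₀ ≠ t := fun h => by simpa using (hφ₂ x₀ hx₀).mpr h
  exact hx₀_off <| apply_eq_of_forall_apply_eq_of_ne φ₂ hc hsum hx₀ hcx₀ fun x hx hne =>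
    (hφ₂ x hx).mp (by simpa using hne)

end LinearRelation

theorem no_four_point_set_shattered_general {F : Type*} [Field F]
    (E : Finset (Fin 3 → F)) (t : F) (ht : t ≠ 0)
    (C : Finset (Fin 3 → F)) (hC : C.card = 4) :
    ¬ (∀ f : (Fin 3 → F) → Bool, ∃ y ∈ E, ∀ x ∈ C, (f x = true ↔ dot3 x y = t)) := by
  intro H
  refine not_forall_exists_dual_of_finrank_lt_card (C := C) (by simp [hC]) ht fun f => ?_
  obtain ⟨y, -, hy⟩ := H f
  exact ⟨(dotProductBilin F F).flip y, hy⟩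

theorem no_four_point_set_shattered {F : Type*} [Field F] [Fintype F] [DecidableEq F]
    (E : Finset (Fin 3 → F)) (t : F) (ht : t ≠ 0)
    (C : Finset (Fin 3 → F)) (hCE : C ⊆ E) (hC : C.card = 4) :
    ¬ (∀ f : (Fin 3 → F) → Bool, ∃ y ∈ E, ∀ x ∈ C, (f x = true ↔ dot3 x y = t)) :=
  no_four_point_set_shattered_general E t ht C hC
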